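/- Let k ≥ 4 be an integer and let c be a real number with 0 < c < 2/(k + √(k² − 4k)), and set C := k·c² − k·c + 1, so that C > 0. Let S be a set of n points in the real plane ℝ², each colored red or blue, such that no line contains more than k points of S, and suppose that one of the two color classes has at most c·n points. Then the number of monochromatic lines of S is at least (C·n² − n)/(k(k−1)). -/

import Mathlib

/-- A line in the plane `ℝ × ℝ` is a one-dimensional affine subspace
(viewed as a set of points). -/
def IsLine (L : Set (ℝ × ℝ)) : Prop :=
  ∃ ℓ : AffineSubspace ℝ (ℝ × ℝ), Module.finrank ℝ ℓ.direction = 1 ∧ L = (ℓ : Set (ℝ × ℝ))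

/-- The monochromatic lines of a two-colored point set `S`: lines containing at least
two points of `S`, all points of `S` on the line having the same color. -/
def monoLines (S : Set (ℝ × ℝ)) (c : (ℝ × ℝ) → Bool) : Set (Set (ℝ × ℝ)) :=
  {L | IsLine L ∧ 2 ≤ (S ∩ L).ncard ∧ ∀ p ∈ S ∩ L, ∀ q ∈ S ∩ L, c p = c q}

/-!
Count ordered pairs of distinct points line by line: `n(n-1) = ∑ m_L(m_L-1)` over the lines
spanned by `S`, where `m_L ≤ k` is the number of points on `L`. A monochromatic line contributes
at most `k(k-1)`. A line with `a ≥ 1` red and `b ≥ 1` blue points has `m_L - 1 ≤ ab`, so it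
contributes at most `k·ab`, and summing `2ab` over the lines counts the `2rb` ordered bichromatic
pairs of `S`. Hence `n(n-1) ≤ M·k(k-1) + k·rb`, and `rb ≤ c(1-c)n²` because the smaller color
class has at most `cn` points with `c < 1/2`. Finally `1 - k c (1-c) = C`.
-/

open Finset

theorem finrank_direction_affineSpan_pair {p q : ℝ × ℝ} (h : p ≠ q) :
    Module.finrank ℝ (affineSpan ℝ {p, q}).direction = 1 := by
  rw [direction_affineSpan, vectorSpan_pair]
  exact finrank_span_singleton (sub_ne_zero.2 h)

theorem IsLine.eq_affineSpan_pair {L : Set (ℝ × ℝ)} (hL : IsLine L) {p q : ℝ × ℝ}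
    (hp : p ∈ L) (hq : q ∈ L) (hpq : p ≠ q) :
    L = (affineSpan ℝ {p, q} : Set (ℝ × ℝ)) := by
  obtain ⟨ℓ, hℓ, rfl⟩ := hL
  have hle : affineSpan ℝ {p, q} ≤ ℓ := by
    rw [affineSpan_le]
    simp [Set.insert_subset_iff, hp, hq]
  have hdir : (affineSpan ℝ {p, q}).direction = ℓ.direction :=
    Submodule.eq_of_le_of_finrank_le (AffineSubspace.direction_le hle) <| by
      rw [hℓ, finrank_direction_affineSpan_pair hpq]
  rw [AffineSubspace.eq_of_direction_eq_of_nonempty_of_le hdir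
    ((affineSpan_nonempty ℝ).2 (Set.insert_nonempty p {q})) hle]

section

open scoped Classical

variable {α : Type*}

def IsMonochromaticOn (col : α → Bool) (s : Set α) : Prop :=
  ∀ p ∈ s, ∀ q ∈ s, col p = col q

theorem card_filter_true_add_card_filter_false (col : α → Bool) (s : Finset α) :
    #{x ∈ s | col x = true} + #{x ∈ s | col x = false} = #s := by
  simpa using card_filter_add_card_filter_not (s := s) (fun x => col x = true)

theorem card_filter_offDiag_ne_colors (col : α → Bool) (s : Finset α) :
    #{pq ∈ s.offDiag | col pq.1 ≠ col pq.2} =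
      2 * (#{x ∈ s | col x = true} * #{x ∈ s | col x = false}) := by
  have hsplit : {pq ∈ s.offDiag | col pq.1 ≠ col pq.2} =
      {x ∈ s | col x = true} ×ˢ {x ∈ s | col x = false} ∪
        {x ∈ s | col x = false} ×ˢ {x ∈ s | col x = true} := by
    ext ⟨p, q⟩
    simp only [mem_filter, mem_offDiag, mem_union, mem_product]
    by_cases hpq : p = q
    · subst hpq
      cases col p <;> simp
    · cases col p <;> cases col q <;> simp [hpq]
  have hdisj : Disjoint ({x ∈ s | col x = true} ×ˢ {x ∈ s | col x = false})
      ({x ∈ s | col x = false} ×ˢ {x ∈ s | col x = true}) :=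
    disjoint_product.2 <| .inl <| disjoint_filter.2 fun _ _ h => by simp [h]
  rw [hsplit, card_union_of_disjoint hdisj, card_product, card_product]
  ring

theorem card_offDiag_le_mul_card_colors (col : α → Bool) {s : Finset α} {k : ℕ}
    (hs : #s ≤ k) (hmix : ∃ p ∈ s, ∃ q ∈ s, col p ≠ col q) :
    #s.offDiag ≤ k * (#{x ∈ s | col x = true} * #{x ∈ s | col x = false}) := by
  obtain ⟨p, hp, q, hq, hpq⟩ := hmix
  have hpos (b : Bool) : 0 < #{x ∈ s | col x = b} := by
    refine card_pos.2 ?_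
    by_cases hb : col p = b
    · exact ⟨p, mem_filter.2 ⟨hp, hb⟩⟩
    · exact ⟨q, mem_filter.2 ⟨hq, by cases b <;> cases hcp : col p <;> simp_all⟩⟩
  -- the color counts `a, b ≥ 1` satisfy `a + b - 1 ≤ a b` since `(a - 1)(b - 1) ≥ 0`
  have hpred : #s - 1 ≤ #{x ∈ s | col x = true} * #{x ∈ s | col x = false} := by
    rw [← card_filter_true_add_card_filter_false col s, Nat.sub_le_iff_le_add]
    nlinarith [hpos true, hpos false]
  calc #s.offDiag = #s * (#s - 1) := by rw [offDiag_card, Nat.mul_sub_one]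
    _ ≤ _ := Nat.mul_le_mul hs hpred

variable {F : Finset α} {Lines : Finset (Set α)}

theorem sum_card_filter_offDiag_inter
    (hLines : ∀ p ∈ F, ∀ q ∈ F, p ≠ q → ∃! L, L ∈ Lines ∧ p ∈ L ∧ q ∈ L)
    (P : α × α → Prop) [DecidablePred P] :
    ∑ L ∈ Lines, #{pq ∈ {x ∈ F | x ∈ L}.offDiag | P pq} = #{pq ∈ F.offDiag | P pq} := by
  rw [← card_biUnion]
  · congr 1
    ext ⟨p, q⟩
    simp only [mem_biUnion, mem_filter, mem_offDiag]
    constructor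
    · rintro ⟨L, -, ⟨⟨hp, -⟩, ⟨hq, -⟩, hpq⟩, hP⟩
      exact ⟨⟨hp, hq, hpq⟩, hP⟩
    · rintro ⟨⟨hp, hq, hpq⟩, hP⟩
      obtain ⟨L, ⟨hL, hpL, hqL⟩, -⟩ := hLines p hp q hq hpq
      exact ⟨L, hL, ⟨⟨hp, hpL⟩, ⟨hq, hqL⟩, hpq⟩, hP⟩
  · intro L hL L' hL' hne
    refine disjoint_left.2 fun ⟨p, q⟩ h h' => hne ?_
    simp only [mem_filter, mem_offDiag] at h h'
    exact (hLines p h.1.1.1 q h.1.2.1.1 h.1.2.2).unique ⟨hL, h.1.1.2, h.1.2.1.2⟩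
      ⟨hL', h'.1.1.2, h'.1.2.1.2⟩

theorem card_offDiag_le_of_existsUnique_line (col : α → Bool) {k : ℕ}
    (hLines : ∀ p ∈ F, ∀ q ∈ F, p ≠ q → ∃! L, L ∈ Lines ∧ p ∈ L ∧ q ∈ L)
    (hk : ∀ L ∈ Lines, #{x ∈ F | x ∈ L} ≤ k) :
    #F.offDiag ≤
      #{L ∈ Lines | IsMonochromaticOn col (↑F ∩ L)} * (k * (k - 1)) +
        k * (#{x ∈ F | col x = true} * #{x ∈ F | col x = false}) := by
  have htotal : ∑ L ∈ Lines, #{x ∈ F | x ∈ L}.offDiag = #F.offDiag := by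
    simpa using sum_card_filter_offDiag_inter hLines (fun _ => True)
  have hmono : ∑ L ∈ Lines with IsMonochromaticOn col (↑F ∩ L), #{x ∈ F | x ∈ L}.offDiag ≤
      #{L ∈ Lines | IsMonochromaticOn col (↑F ∩ L)} * (k * (k - 1)) := by
    refine sum_le_card_nsmul _ _ _ fun L hL => ?_
    rw [offDiag_card, ← Nat.mul_sub_one]
    have := hk L (mem_filter.1 hL).1
    exact Nat.mul_le_mul this (Nat.sub_le_sub_right this 1)
  have hmixed : 2 * ∑ L ∈ Lines with ¬ IsMonochromaticOn col (↑F ∩ L), #{x ∈ F | x ∈ L}.offDiag ≤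
      2 * (k * (#{x ∈ F | col x = true} * #{x ∈ F | col x = false})) := by
    calc 2 * ∑ L ∈ Lines with ¬ IsMonochromaticOn col (↑F ∩ L), #{x ∈ F | x ∈ L}.offDiag
        ≤ k * ∑ L ∈ Lines with ¬ IsMonochromaticOn col (↑F ∩ L),
            #{pq ∈ {x ∈ F | x ∈ L}.offDiag | col pq.1 ≠ col pq.2} := by
          rw [mul_sum, mul_sum]
          refine sum_le_sum fun L hL => ?_
          have hmix : ∃ p ∈ {x ∈ F | x ∈ L}, ∃ q ∈ {x ∈ F | x ∈ L}, col p ≠ col q := by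
            simpa [IsMonochromaticOn, and_assoc] using (mem_filter.1 hL).2
          rw [card_filter_offDiag_ne_colors]
          linarith [card_offDiag_le_mul_card_colors col (hk L (mem_filter.1 hL).1) hmix]
      _ ≤ k * ∑ L ∈ Lines, #{pq ∈ {x ∈ F | x ∈ L}.offDiag | col pq.1 ≠ col pq.2} :=
          Nat.mul_le_mul_left k (sum_le_sum_of_subset (filter_subset _ _))
      _ = _ := by
          rw [sum_card_filter_offDiag_inter hLines, card_filter_offDiag_ne_colors]
          ring
  rw [← htotal, ← sum_filter_add_sum_filter_not Lines fun L => IsMonochromaticOn col (↑F ∩ L)]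
  omega

theorem Finset.ncard_coe_sep {α : Type*} (F : Finset α) (P : α → Prop) [DecidablePred P] :
    {x ∈ (F : Set α) | P x}.ncard = #{x ∈ F | P x} := by
  rw [← Set.ncard_coe_finset, coe_filter]
  rfl

theorem Finset.ncard_coe_inter {α : Type*} (F : Finset α) (L : Set α) :
    ((F : Set α) ∩ L).ncard = #{x ∈ F | x ∈ L} :=
  F.ncard_coe_sep (· ∈ L)

noncomputable def spannedLines (F : Finset (ℝ × ℝ)) : Finset (Set (ℝ × ℝ)) :=
  F.offDiag.image fun pq => affineSpan ℝ {pq.1, pq.2}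

theorem mem_spannedLines {F : Finset (ℝ × ℝ)} {L : Set (ℝ × ℝ)} :
    L ∈ spannedLines F ↔ IsLine L ∧ 2 ≤ #{x ∈ F | x ∈ L} := by
  constructor
  · intro hL
    obtain ⟨⟨p, q⟩, hpq, rfl⟩ := mem_image.1 hL
    obtain ⟨hp, hq, hne⟩ := mem_offDiag.1 hpq
    refine ⟨⟨_, finrank_direction_affineSpan_pair hne, rfl⟩, one_lt_card.2 ⟨p, ?_, q, ?_, hne⟩⟩
    · simpa [hp] using left_mem_affineSpan_pair ℝ p q
    · simpa [hq] using right_mem_affineSpan_pair ℝ p q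
  · rintro ⟨hL, h2⟩
    obtain ⟨p, hp, q, hq, hne⟩ := one_lt_card.1 h2
    rw [mem_filter] at hp hq
    exact mem_image.2 ⟨(p, q), mem_offDiag.2 ⟨hp.1, hq.1, hne⟩,
      (hL.eq_affineSpan_pair hp.2 hq.2 hne).symm⟩

theorem existsUnique_mem_spannedLines {F : Finset (ℝ × ℝ)} {p q : ℝ × ℝ} (hp : p ∈ F)
    (hq : q ∈ F) (hne : p ≠ q) : ∃! L, L ∈ spannedLines F ∧ p ∈ L ∧ q ∈ L :=
  ⟨affineSpan ℝ {p, q}, ⟨mem_image.2 ⟨(p, q), mem_offDiag.2 ⟨hp, hq, hne⟩, rfl⟩,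
    left_mem_affineSpan_pair ℝ p q, right_mem_affineSpan_pair ℝ p q⟩,
    fun _ ⟨hL, hpL, hqL⟩ => (mem_spannedLines.1 hL).1.eq_affineSpan_pair hpL hqL hne⟩

theorem monoLines_coe (F : Finset (ℝ × ℝ)) (col : ℝ × ℝ → Bool) :
    monoLines F col = ↑{L ∈ spannedLines F | IsMonochromaticOn col (↑F ∩ L)} := by
  ext L
  simp only [monoLines, coe_filter, mem_spannedLines, Finset.ncard_coe_inter, and_assoc]
  rfl

end

-- `2 / (k + √(k² - 4k)) = (k - √(k² - 4k)) / (2k)` is the smaller root of `k x² - k x + 1`.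
theorem quadratic_pos_of_lt_two_div_add_sqrt {k c : ℝ} (hk : 4 ≤ k)
    (hc : c < 2 / (k + √(k ^ 2 - 4 * k))) : 0 < k * c ^ 2 - k * c + 1 := by
  set s := √(k ^ 2 - 4 * k)
  have hs0 : 0 ≤ s := Real.sqrt_nonneg _
  have hs2 : s ^ 2 = k ^ 2 - 4 * k := Real.sq_sqrt (by nlinarith)
  have hcs : c * (k + s) < 2 := (lt_div_iff₀ (by positivity)).1 hc
  have hsmall : 0 < k - s - 2 * k * c := by nlinarith
  have hlarge : 0 < k + s - 2 * k * c := by linarith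
  nlinarith [mul_pos hsmall hlarge]

theorem lt_half_of_lt_two_div_add_sqrt {k c : ℝ} (hk : 4 ≤ k)
    (hc : c < 2 / (k + √(k ^ 2 - 4 * k))) : c < 1 / 2 :=
  calc c < 2 / (k + √(k ^ 2 - 4 * k)) := hc
    _ ≤ 2 / 4 := div_le_div_of_nonneg_left zero_le_two four_pos
      (by linarith [Real.sqrt_nonneg (k ^ 2 - 4 * k)])
    _ = 1 / 2 := by norm_num

theorem mul_le_mul_one_sub_mul_sq {r b n c : ℝ} (hr : 0 ≤ r) (hb : 0 ≤ b) (hc : c ≤ 1 / 2)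
    (hsum : r + b = n) (hsmall : r ≤ c * n ∨ b ≤ c * n) : r * b ≤ c * (1 - c) * n ^ 2 := by
  subst hsum
  rcases hsmall with h | h
  · nlinarith [mul_nonneg (sub_nonneg.2 h) (show 0 ≤ (1 - c) * (r + b) - r by nlinarith)]
  · nlinarith [mul_nonneg (sub_nonneg.2 h) (show 0 ≤ (1 - c) * (r + b) - b by nlinarith)]

theorem mono_lines_unbalanced_coloring_general (k : ℕ) (hk : 4 ≤ k)
    (c : ℝ)
    (hc1 : c < 2 / ((k : ℝ) + Real.sqrt ((k : ℝ) ^ 2 - 4 * k)))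
    (C : ℝ) (hC : C = (k : ℝ) * c ^ 2 - (k : ℝ) * c + 1)
    (n : ℕ) (S : Set (ℝ × ℝ)) (hfin : S.Finite) (hcard : S.ncard = n)
    (col : (ℝ × ℝ) → Bool)
    (h_k : ∀ L : Set (ℝ × ℝ), IsLine L → (S ∩ L).ncard ≤ k)
    (h_unbal : (({p ∈ S | col p = true}.ncard : ℝ) ≤ c * n) ∨
               (({p ∈ S | col p = false}.ncard : ℝ) ≤ c * n)) :
    0 < C ∧
      ((monoLines S col).ncard : ℝ) ≥ (C * (n : ℝ) ^ 2 - n) / (k * (k - 1)) := by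
  lift S to Finset (ℝ × ℝ) using hfin with F
  have hk' : (4 : ℝ) ≤ k := by exact_mod_cast hk
  refine ⟨hC ▸ quadratic_pos_of_lt_two_div_add_sqrt hk' hc1, ?_⟩
  have hcount := card_offDiag_le_of_existsUnique_line col
    (fun _ hp _ hq hne => existsUnique_mem_spannedLines hp hq hne)
    (fun L hL => F.ncard_coe_inter L ▸ h_k L (mem_spannedLines.1 hL).1)
  rw [Set.ncard_coe_finset] at hcard
  rw [F.ncard_coe_sep, F.ncard_coe_sep] at h_unbal
  rw [offDiag_card, hcard, ← Set.ncard_coe_finset, ← monoLines_coe] at hcount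
  have hsum : (#{x ∈ F | col x = true} : ℝ) + #{x ∈ F | col x = false} = n := by
    exact_mod_cast hcard ▸ card_filter_true_add_card_filter_false col F
  have hrb : (#{x ∈ F | col x = true} : ℝ) * #{x ∈ F | col x = false} ≤ c * (1 - c) * n ^ 2 :=
    mul_le_mul_one_sub_mul_sq (by positivity) (by positivity)
      (lt_half_of_lt_two_div_add_sqrt hk' hc1).le hsum h_unbal
  have hreal : (n : ℝ) ^ 2 - n ≤ (monoLines (↑F) col).ncard * (k * (k - 1)) +
      k * (#{x ∈ F | col x = true} * #{x ∈ F | col x = false}) := by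
    have := (Nat.cast_le (α := ℝ)).2 hcount
    push_cast [Nat.cast_sub (Nat.le_mul_self n), Nat.cast_sub (by omega : 1 ≤ k)] at this
    linarith
  rw [ge_iff_le, div_le_iff₀ (by nlinarith), hC]
  nlinarith [mul_le_mul_of_nonneg_left hrb (by positivity : (0 : ℝ) ≤ k)]

/-- Let `k ≥ 4`, `0 < c < 2/(k + √(k² − 4k))` and `C := k·c² − k·c + 1`.  Then `C > 0`,
and every two-colored set of `n` points in the plane with at most `k` points on any
line, in which one of the two color classes has at most `c·n` points, has at least
`(C·n² − n)/(k(k−1))` monochromatic lines. -/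
theorem mono_lines_unbalanced_coloring (k : ℕ) (hk : 4 ≤ k)
    (c : ℝ) (hc0 : 0 < c)
    (hc1 : c < 2 / ((k : ℝ) + Real.sqrt ((k : ℝ) ^ 2 - 4 * k)))
    (C : ℝ) (hC : C = (k : ℝ) * c ^ 2 - (k : ℝ) * c + 1)
    (n : ℕ) (S : Set (ℝ × ℝ)) (hfin : S.Finite) (hcard : S.ncard = n)
    (col : (ℝ × ℝ) → Bool)
    (h_k : ∀ L : Set (ℝ × ℝ), IsLine L → (S ∩ L).ncard ≤ k)
    (h_unbal : (({p ∈ S | col p = true}.ncard : ℝ) ≤ c * n) ∨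
               (({p ∈ S | col p = false}.ncard : ℝ) ≤ c * n)) :
    0 < C ∧
      ((monoLines S col).ncard : ℝ) ≥ (C * (n : ℝ) ^ 2 - n) / (k * (k - 1)) :=
  mono_lines_unbalanced_coloring_general k hk c hc1 C hC n S hfin hcard col h_k h_unbal
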